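/- arXiv:1911.11567 — 5 statements merged into one kernel-verified Lean document; each statement's English description precedes it below -/
import Mathlib

section
/- Let p and q be distinct primes with p < q, and let G be a group of order p²q. If two distinct Sylow p-subgroups P₁, P₂ of G intersect nontrivially, then their intersection N = P₁ ∩ P₂ has order p and is normal in G. -/
/-!
Both Sylow `p`-subgroups have order `p²`, so `N = P₁ ∩ P₂` is a proper nontrivial subgroup of
`P₁`, of order `p`. Groups of order `p²` are abelian, so `P₁` and `P₂` both normalize `N`; hence
the normalizer of `N` properly contains `P₁`, whose index `q` is prime, and so it is all of `G`.
-/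

namespace Subgroup

variable {G : Type*} [Group G]

theorem le_normalizer_of_isMulCommutative {H K : Subgroup G} [IsMulCommutative K] (hHK : H ≤ K) :
    K ≤ normalizer (H : Set G) :=
  (normal_subgroupOf_iff_le_normalizer hHK).mp inferInstance

theorem eq_top_of_index_prime_of_lt {H K : Subgroup G} (hH : H.index.Prime) (hHK : H < K) :
    K = ⊤ := by
  rcases (Nat.dvd_prime hH).mp (index_dvd_of_le hHK.le) with hK | hK
  · exact index_eq_one.mp hK
  · have : H.relIndex K = 1 := by
      simpa [hK, hH.ne_zero] using relIndex_mul_index hHK.le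
    exact absurd (relIndex_eq_one.mp this) hHK.not_ge

theorem card_eq_prime_of_lt_of_card_eq_prime_sq {p : ℕ} (hp : p.Prime) {H K : Subgroup G}
    (hK : Nat.card K = p ^ 2) (hHK : H < K) (hH : H ≠ ⊥) : Nat.card H = p := by
  have : Finite K := Nat.finite_of_card_ne_zero (by simp [hK, hp.ne_zero])
  obtain ⟨k, hk2, hk⟩ := (Nat.dvd_prime_pow hp).mp (hK ▸ card_dvd_of_le hHK.le)
  interval_cases k
  · exact absurd (eq_bot_of_card_eq H (by simpa using hk)) hH
  · simpa using hk
  · exact absurd (eq_of_le_of_card_ge hHK.le (by rw [hk, hK])) hHK.ne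

end Subgroup

namespace Sylow

variable {G : Type*} [Group G] {p : ℕ}

theorem not_le_of_ne {P Q : Sylow p G} (hne : P ≠ Q) : ¬(P : Subgroup G) ≤ Q :=
  fun h => hne (ext (P.is_maximal' Q.isPGroup' h).symm)

variable [Finite G] [hp : Fact p.Prime]

theorem card_eq_pow_of_card_eq_pow_mul (P : Sylow p G) {n m : ℕ} (hG : Nat.card G = p ^ n * m)
    (hm : ¬p ∣ m) : Nat.card P = p ^ n := by
  have hm0 : m ≠ 0 := by rintro rfl; exact hm (dvd_zero p)
  rw [P.card_eq_multiplicity, hG, Nat.factorization_mul (pow_ne_zero n hp.out.ne_zero) hm0]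
  simp [hp.out.factorization_pow, Nat.factorization_eq_zero_of_not_dvd hm]

end Sylow

theorem inter_of_sylows_normal
    {p q : ℕ} (hp : p.Prime) (hq : q.Prime) (hpq : p < q)
    {G : Type*} [Group G] [Fintype G] (hG : Fintype.card G = p ^ 2 * q)
    (P₁ P₂ : Sylow p G) (hne : P₁ ≠ P₂)
    (hint : (P₁ : Subgroup G) ⊓ (P₂ : Subgroup G) ≠ ⊥) :
    Nat.card ((P₁ : Subgroup G) ⊓ (P₂ : Subgroup G) : Subgroup G) = p ∧
      ((P₁ : Subgroup G) ⊓ (P₂ : Subgroup G)).Normal := by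
  have := Fact.mk hp
  set N := (P₁ : Subgroup G) ⊓ P₂
  have hcardG : Nat.card G = p ^ 2 * q := by rw [Nat.card_eq_fintype_card, hG]
  have hp_ndvd_q : ¬p ∣ q := fun h => hpq.ne ((Nat.prime_dvd_prime_iff_eq hp hq).mp h)
  have hcard (P : Sylow p G) : Nat.card P = p ^ 2 := P.card_eq_pow_of_card_eq_pow_mul hcardG hp_ndvd_q
  have hNP₁ : N < P₁ := inf_le_left.lt_of_ne fun h => Sylow.not_le_of_ne hne (h ▸ inf_le_right)
  refine ⟨Subgroup.card_eq_prime_of_lt_of_card_eq_prime_sq hp (hcard P₁) hNP₁ hint, ?_⟩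
  have hnorm (P : Sylow p G) (hNP : N ≤ P) : (P : Subgroup G) ≤ Subgroup.normalizer (N : Set G) :=
    have := IsPGroup.isMulCommutative_of_card_eq_prime_sq (hcard P)
    Subgroup.le_normalizer_of_isMulCommutative hNP
  have hindex : (P₁ : Subgroup G).index = q := by
    refine Nat.eq_of_mul_eq_mul_left (pow_pos hp.pos 2) ?_
    rw [← hcardG, ← (P₁ : Subgroup G).card_mul_index, hcard P₁]
  have hlt : (P₁ : Subgroup G) < Subgroup.normalizer (N : Set G) :=
    (hnorm P₁ inf_le_left).lt_of_not_ge fun h =>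
      Sylow.not_le_of_ne hne.symm ((hnorm P₂ inf_le_right).trans h)
  exact Subgroup.normalizer_eq_top_iff.mp
    (Subgroup.eq_top_of_index_prime_of_lt (hindex ▸ hq) hlt)
end

section
/- Let G = H × K be a direct product of finite groups H and K having no common direct factors. Then Aut(G) is isomorphic to the group of formal 2×2 matrices [[a, c],[b, d]] with a ∈ Aut(H), d ∈ Aut(K), b ∈ Hom(K, Z(H)), c ∈ Hom(H, Z(K)), acting naturally on H × K, with multiplication given by matrix composition. -/
/-!
Write `φ (h, k) = (a h * b k, c h * d k)` and `φ⁻¹ (h, k) = (a' h * b' k, c' h * d' k)`.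
From `φ⁻¹ ∘ φ = id` we get `a' (a x) * b' (c x) = x` with commuting factors, so `p = b' ∘ c`
commutes with inner automorphisms of `H`; likewise `q = c ∘ b'` on `K`. Some power `n ≠ 0`
makes both `e = pⁿ` and `f = qⁿ` idempotent, and Fitting's argument splits
`H ≃ range e × ker e` and `K ≃ range f × ker f`. As `e = s ∘ c` and `f = c ∘ s` for
`s = pⁿ⁻¹ ∘ b'`, the map `c` restricts to `range e ≃ range f`, a common direct factor, which is
therefore trivial. An element of `ker a` is fixed by `p`, hence lies in `range e`: so `a` is
injective, hence bijective, and symmetrically so is `d`. Finally, once `a` is injective, `c` is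
central: for `g = φ⁻¹ (1, k)` the commutator `⁅(x, 1), g⁆` is killed by `a`, so `φ (x, 1)`
commutes with `φ g = (1, k)`.
-/

open scoped commutatorElement

theorem exists_isIdempotentElem_pow {M : Type*} [Monoid M] [Finite M] (a : M) :
    ∃ n ≠ 0, IsIdempotentElem (a ^ n) := by
  obtain ⟨i, j, hij, hpow⟩ := Set.finite_univ.exists_lt_map_eq_of_forall_mem
    (f := fun n : ℕ ↦ a ^ n) fun _ ↦ Set.mem_univ _
  obtain ⟨d, rfl⟩ := Nat.exists_eq_add_of_lt hij
  have hperiod : ∀ t, a ^ (i + t * (d + 1)) = a ^ i := by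
    intro t
    induction t with
    | zero => simp
    | succ t ih =>
      rw [add_mul, one_mul, ← add_assoc, pow_add, ih, ← pow_add, ← add_assoc, hpow]
  -- a multiple of the period `d + 1` that is at least the preperiod `i`
  set m := (i + 1) * (d + 1)
  obtain ⟨r, hr⟩ : ∃ r, m = i + r := ⟨d * (i + 1) + 1, by ring⟩
  refine ⟨m, by positivity, ?_⟩
  calc a ^ m * a ^ m = a ^ r * a ^ (i + m) := by rw [← pow_add, ← pow_add, hr]; ring_nf
    _ = a ^ m := by rw [hperiod, ← pow_add, add_comm, hr]

namespace MonoidHom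

variable {A B : Type*} [Group A] [Group B]

def IsNormalEndo (f : A →* A) : Prop := ∀ a : A, Function.Commute f (MulAut.conj a)

theorem isNormalEndo_of_mul_eq {u : A → A} {v : A →* A} (huv : ∀ a, u a * v a = a)
    (hcomm : ∀ a x, Commute (u a) (v x)) : v.IsNormalEndo := by
  intro a x
  have h : u a * (v a * v x * (v a)⁻¹) * (u a)⁻¹ = v a * v x * (v a)⁻¹ := mul_inv_eq_of_eq_mul
    (((hcomm a a).mul_right (hcomm a x)).mul_right (hcomm a a).inv_right).eq
  calc v (a * x * a⁻¹) = u a * (v a * v x * (v a)⁻¹) * (u a)⁻¹ := by simp [h]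
    _ = (u a * v a) * v x * (u a * v a)⁻¹ := by group
    _ = a * v x * a⁻¹ := by rw [huv]

section Fitting

variable {e : A →* A}

theorem IsNormalEndo.commute_of_mem_ker_of_mem_range (hn : e.IsNormalEndo)
    (he : ∀ x, e (e x) = e x) {k r : A} (hk : k ∈ e.ker) (hr : r ∈ e.range) : Commute k r := by
  obtain ⟨r, rfl⟩ := hr
  have h : k * e r * k⁻¹ = e r :=
    calc k * e r * k⁻¹ = e (k * e r * k⁻¹) := by simpa [he] using (hn k (e r)).symm
      _ = e r := by rw [map_mul, map_mul, map_inv, mem_ker.1 hk, he]; group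
  exact mul_inv_eq_iff_eq_mul.1 h

noncomputable def IsNormalEndo.mulEquivRangeProdKer (hn : e.IsNormalEndo)
    (he : ∀ x, e (e x) = e x) : A ≃* e.range × e.ker :=
  MulEquiv.symm <| MulEquiv.ofBijective
    (noncommCoprod e.range.subtype e.ker.subtype
      fun r k ↦ (hn.commute_of_mem_ker_of_mem_range he k.2 r.2).symm) <| by
    refine ⟨(injective_iff_map_eq_one _).2 ?_, fun a ↦ ?_⟩
    · rintro ⟨⟨_, x, rfl⟩, ⟨k, hk⟩⟩ h
      have hx : e x = k⁻¹ := eq_inv_of_mul_eq_one_left h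
      have hex : e x = 1 := by rw [← he, hx, map_inv, mem_ker.1 hk, inv_one]
      exact Prod.ext (Subtype.ext hex) (Subtype.ext (inv_eq_one.1 (hx ▸ hex)))
    · refine ⟨(⟨e a, mem_range.2 ⟨a, rfl⟩⟩, ⟨(e a)⁻¹ * a, by simp [he]⟩), ?_⟩
      exact mul_inv_cancel_left (e a) a

end Fitting

noncomputable def rangeCompMulEquiv (γ : A →* B) (s : B →* A)
    (he : ∀ x, s (γ (s (γ x))) = s (γ x)) (hf : ∀ y, γ (s (γ (s y))) = γ (s y)) :
    (s.comp γ).range ≃* (γ.comp s).range :=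
  MulEquiv.ofBijective
    ((γ.comp (s.comp γ).range.subtype).codRestrict _ <| by
      rintro ⟨_, x, rfl⟩; exact ⟨γ x, rfl⟩) <| by
    refine ⟨(injective_iff_map_eq_one _).2 ?_, ?_⟩
    · rintro ⟨_, x, rfl⟩ h
      have h' : γ (s (γ x)) = 1 := congr_arg Subtype.val h
      exact Subtype.ext <| by simp only [comp_apply, OneMemClass.coe_one]; rw [← he, h', map_one]
    · rintro ⟨_, y, rfl⟩
      exact ⟨⟨s (γ (s y)), s y, rfl⟩, Subtype.ext (hf y)⟩

end MonoidHom

namespace MulEquiv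

variable {H K H' K' : Type*} [Group H] [Group K] [Group H'] [Group K'] (φ : H × K ≃* H' × K')

/- In the notation `[[a, c], [b, d]]` of the statement, `a = φ.fstInl`, `b = φ.fstInr`,
`c = φ.sndInl` and `d = φ.sndInr`. -/

def fstInl : H →* H' := (MonoidHom.fst H' K').comp (φ.toMonoidHom.comp (MonoidHom.inl H K))

def fstInr : K →* H' := (MonoidHom.fst H' K').comp (φ.toMonoidHom.comp (MonoidHom.inr H K))

def sndInl : H →* K' := (MonoidHom.snd H' K').comp (φ.toMonoidHom.comp (MonoidHom.inl H K))

def sndInr : K →* K' := (MonoidHom.snd H' K').comp (φ.toMonoidHom.comp (MonoidHom.inr H K))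

@[simp] theorem fstInl_apply (x : H) : φ.fstInl x = (φ (x, 1)).1 := rfl

@[simp] theorem fstInr_apply (y : K) : φ.fstInr y = (φ (1, y)).1 := rfl

@[simp] theorem sndInl_apply (x : H) : φ.sndInl x = (φ (x, 1)).2 := rfl

@[simp] theorem sndInr_apply (y : K) : φ.sndInr y = (φ (1, y)).2 := rfl

theorem apply_mk (x : H) (y : K) :
    φ (x, y) = (φ.fstInl x * φ.fstInr y, φ.sndInl x * φ.sndInr y) := by
  have hxy : ((x, y) : H × K) = (x, 1) * (1, y) := by simp
  rw [hxy, map_mul]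
  rfl

theorem commute_inl_inr (x : H) (y : K) : Commute ((x, 1) : H × K) (1, y) := by
  ext <;> simp

theorem commute_fstInl_fstInr (x : H) (y : K) : Commute (φ.fstInl x) (φ.fstInr y) :=
  congr_arg Prod.fst ((commute_inl_inr x y).map φ).eq

theorem commute_sndInl_sndInr (x : H) (y : K) : Commute (φ.sndInl x) (φ.sndInr y) :=
  congr_arg Prod.snd ((commute_inl_inr x y).map φ).eq

theorem sndInl_mem_center (hα : Function.Injective φ.fstInl) (x : H) :
    φ.sndInl x ∈ Subgroup.center K' := by
  rw [Subgroup.mem_center_iff]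
  intro y
  set g := φ.symm (1, y) with hg
  have hcomm : ⁅((x, 1) : H × K), g⁆ = (⁅x, g.1⁆, 1) := by
    ext <;> simp [commutatorElement_def]
  have hx : Commute x g.1 := commutatorElement_eq_one_iff_commute.1 <| hα <|
    calc φ.fstInl ⁅x, g.1⁆ = (φ ⁅((x, 1) : H × K), g⁆).1 := by rw [hcomm]; rfl
      _ = ⁅(φ (x, 1)).1, 1⁆ := by rw [map_commutatorElement, hg, apply_symm_apply]; rfl
      _ = φ.fstInl 1 := by rw [commutatorElement_one_right, map_one]
  have hxg : Commute ((x, 1) : H × K) g := Prod.ext hx (by simp)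
  have := congr_arg Prod.snd (hxg.map φ).eq
  simp only [hg, apply_symm_apply, Prod.snd_mul] at this
  exact this.symm

theorem eq_blocks_of_forall_apply_mk {a : H →* H'} {b : K →* H'} {c : H →* K'} {d : K →* K'}
    (h : ∀ x y, φ (x, y) = (a x * b y, c x * d y)) :
    a = φ.fstInl ∧ b = φ.fstInr ∧ c = φ.sndInl ∧ d = φ.sndInr := by
  refine ⟨?_, ?_, ?_, ?_⟩ <;> ext <;> simp [h]

end MulEquiv

def NoCommonDirectFactor (H K : Type) [Group H] [Group K] : Prop :=
  ∀ (L : Type) [Group L], Nontrivial L →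
    (∃ (H' : Type) (_ : Group H'), Nonempty (H ≃* L × H')) →
    (∃ (K' : Type) (_ : Group K'), Nonempty (K ≃* L × K')) → False

namespace NoCommonDirectFactor

variable {H K : Type} [Group H] [Group K]

theorem symm (hno : NoCommonDirectFactor H K) : NoCommonDirectFactor K H :=
  fun L _ hL hK hH ↦ hno L hL hH hK

theorem eq_one_of_mem_range (hno : NoCommonDirectFactor H K) {γ : H →* K} {s : K →* H}
    (hnH : (s.comp γ).IsNormalEndo) (hnK : (γ.comp s).IsNormalEndo)
    (he : ∀ x, s (γ (s (γ x))) = s (γ x)) (hf : ∀ y, γ (s (γ (s y))) = γ (s y))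
    {x : H} (hx : x ∈ (s.comp γ).range) : x = 1 := by
  by_contra hne
  exact hno (s.comp γ).range ⟨⟨x, hx⟩, 1, by simpa [Subtype.ext_iff] using hne⟩
    ⟨_, _, ⟨hnH.mulEquivRangeProdKer he⟩⟩
    ⟨_, _, ⟨(hnK.mulEquivRangeProdKer hf).trans
      ((MonoidHom.rangeCompMulEquiv γ s he hf).symm.prodCongr (.refl _))⟩⟩

theorem eq_one_of_apply_eq_self [Finite H] [Finite K] (hno : NoCommonDirectFactor H K)
    {β : K →* H} {γ : H →* K} (hp : (β.comp γ).IsNormalEndo) (hq : (γ.comp β).IsNormalEndo)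
    {x : H} (hx : β (γ x) = x) : x = 1 := by
  let P : Monoid.End H := β.comp γ
  let Q : Monoid.End K := γ.comp β
  have : Finite (Monoid.End H) := .of_injective _ DFunLike.coe_injective
  have : Finite (Monoid.End K) := .of_injective _ DFunLike.coe_injective
  obtain ⟨n, hn, hidem⟩ := exists_isIdempotentElem_pow (P, Q)
  obtain ⟨m, rfl⟩ := Nat.exists_eq_succ_of_ne_zero hn
  let s : K →* H := MonoidHom.comp (P ^ m) β
  have hsγ : ⇑(s.comp γ) = (β ∘ γ)^[m + 1] := rfl
  have hγs : ⇑(γ.comp s) = (γ ∘ β)^[m + 1] :=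
    funext fun y ↦ Function.Semiconj.iterate_right (f := γ) (fun _ ↦ rfl) m (β y)
  have he : ∀ x, s (γ (s (γ x))) = s (γ x) :=
    DFunLike.congr_fun (congr_arg Prod.fst hidem : P ^ (m + 1) * P ^ (m + 1) = P ^ (m + 1))
  have hf : ∀ y, γ (s (γ (s y))) = γ (s y) := by
    intro y
    change (γ.comp s) ((γ.comp s) y) = (γ.comp s) y
    rw [hγs]
    exact DFunLike.congr_fun
      (congr_arg Prod.snd hidem : Q ^ (m + 1) * Q ^ (m + 1) = Q ^ (m + 1)) y
  refine hno.eq_one_of_mem_range (fun a ↦ hsγ ▸ (hp a).iterate_left _)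
    (fun a ↦ hγs ▸ (hq a).iterate_left _) he hf ⟨x, ?_⟩
  rw [hsγ]
  exact Function.iterate_fixed hx _

theorem fstInl_injective [Finite H] [Finite K] (hno : NoCommonDirectFactor H K)
    (φ : H × K ≃* H × K) : Function.Injective φ.fstInl := by
  set β := φ.symm.fstInr
  set γ := φ.sndInl
  have hH : ∀ x, φ.symm.fstInl (φ.fstInl x) * β (γ x) = x := fun x ↦ by
    have := congr_arg Prod.fst (φ.symm_apply_apply (x, 1))
    rwa [φ.apply_mk, map_one, map_one, mul_one, mul_one, φ.symm.apply_mk] at this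
  have hK : ∀ y, φ.sndInr (φ.symm.sndInr y) * γ (β y) = y := fun y ↦ by
    have := congr_arg Prod.snd (φ.apply_symm_apply (1, y))
    rwa [φ.symm.apply_mk, map_one, map_one, one_mul, one_mul, φ.apply_mk,
      (φ.commute_sndInl_sndInr _ _).eq] at this
  have hp : (β.comp γ).IsNormalEndo :=
    MonoidHom.isNormalEndo_of_mul_eq hH fun _ _ ↦ φ.symm.commute_fstInl_fstInr _ _
  have hq : (γ.comp β).IsNormalEndo :=
    MonoidHom.isNormalEndo_of_mul_eq hK fun _ _ ↦ (φ.commute_sndInl_sndInr _ _).symm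
  refine (injective_iff_map_eq_one _).2 fun x hx ↦ hno.eq_one_of_apply_eq_self hp hq ?_
  simpa only [hx, map_one, one_mul] using hH x

end NoCommonDirectFactor

/-- Bidwell–Curran–McCaughan: automorphisms of a direct product `H × K` of
finite groups with no common direct factor are described by matrices
`[[a, c], [b, d]]` with `a ∈ Aut H`, `d ∈ Aut K`, `b ∈ Hom(K, Z(H))`,
`c ∈ Hom(H, Z(K))`, acting by `(h, k) ↦ (h^a k^b, h^c k^d)`. -/
theorem aut_direct_product_matrices
    {H K : Type} [Group H] [Group K] [Finite H] [Finite K]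
    (hno : ∀ (L : Type) [Group L], Nontrivial L →
      (∃ (H' : Type) (_ : Group H'), Nonempty (H ≃* L × H')) →
      (∃ (K' : Type) (_ : Group K'), Nonempty (K ≃* L × K')) → False) :
    ∀ φ : MulAut (H × K),
      ∃! t : MulAut H × MulAut K × (K →* H) × (H →* K),
        (∀ k : K, t.2.2.1 k ∈ Subgroup.center H) ∧
        (∀ h : H, t.2.2.2 h ∈ Subgroup.center K) ∧
        (∀ (h : H) (k : K), φ (h, k) = (t.1 h * t.2.2.1 k, t.2.2.2 h * t.2.1 k)) := by
  intro φ
  let φ' : MulAut (K × H) := MulAut.congr MulEquiv.prodComm φ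
  have hα : Function.Injective φ.fstInl := NoCommonDirectFactor.fstInl_injective hno φ
  have hδ : Function.Injective φ.sndInr :=
    NoCommonDirectFactor.fstInl_injective (NoCommonDirectFactor.symm hno) φ'
  refine ⟨(.ofBijective _ (Finite.injective_iff_bijective.1 hα),
    .ofBijective _ (Finite.injective_iff_bijective.1 hδ), φ.fstInr, φ.sndInl),
    ⟨φ'.sndInl_mem_center hδ, φ.sndInl_mem_center hα, φ.apply_mk⟩, ?_⟩
  rintro ⟨a, d, b, c⟩ ⟨-, -, h⟩
  obtain ⟨ha, rfl, rfl, hd⟩ :=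
    φ.eq_blocks_of_forall_apply_mk (a := a.toMonoidHom) (d := d.toMonoidHom) h
  exact Prod.ext (MulEquiv.ext fun x ↦ DFunLike.congr_fun ha x)
    (Prod.ext (MulEquiv.ext fun y ↦ DFunLike.congr_fun hd y) rfl)
end

section
/- Let G = C_n ⋊ C_k be a semidirect product of cyclic groups with trivial center. Then Aut(G) is isomorphic to the holomorph Hol(C_n) = C_n ⋊ Aut(C_n). -/
/-!
Trivial center forces `φ` to be injective and a generator `b` of `K` to act on `H` without
nontrivial fixed points, so `g ↦ g / φ b g` is a bijection of the finite group `H`. Its values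
are the commutators `⁅inl g, inr b⁆`, hence `H` is the derived subgroup of `G = H ⋊ K` and every
`σ ∈ Aut G` restricts to some `α ∈ Aut H`. As `Aut H` is abelian, `α` extends to `G` by acting
trivially on `K`, and `σ ∘ α⁻¹` fixes `H` pointwise. Such an automorphism moves `inr b` to
`inl (g / φ b g) * inr b = inl g * inr b * (inl g)⁻¹` for some `g`, so it is conjugation by
`inl g`. Thus `(g, α) ↦ conj (inl g) ∘ α` maps `Hol H` onto `Aut G`, injectively since `G` is
centerless.
-/

open SemidirectProduct MonoidHom Subgroup
open scoped commutatorElement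

theorem IsCyclic.commute_mulAut {H : Type*} [Group H] [IsCyclic H] (α β : MulAut H) :
    Commute α β := by
  obtain ⟨m, hm⟩ := MonoidHom.map_cyclic β.toMonoidHom
  ext x
  simp only [MulEquiv.coe_toMonoidHom] at hm
  simp only [MulAut.mul_apply, hm, map_zpow]

namespace SemidirectProduct

variable {H K : Type*} [Group H] [Group K] {φ : K →* MulAut H}

theorem inl_commutatorMap (b : K) (g : H) :
    (inl (commutatorMap (φ b) g) : H ⋊[φ] K) = ⁅(inl g : H ⋊[φ] K), inr b⁆ := by
  rw [commutatorElement_def, commutatorMap_apply, div_eq_mul_inv, ← map_inv (φ b), map_mul,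
    inl_aut]
  simp only [map_inv, mul_assoc]

open scoped IsMulCommutative in
theorem mul_inl_mul_inv [IsMulCommutative H] (g : H ⋊[φ] K) (x : H) :
    g * inl x * g⁻¹ = inl (φ g.right x) :=
  calc g * inl x * g⁻¹
      = inl g.left * (inr g.right * inl x * (inr g.right)⁻¹) * (inl g.left)⁻¹ := by
        conv_lhs => rw [← inl_left_mul_inr_right g]
        group
    _ = inl (g.left * φ g.right x * g.left⁻¹) := by
      simp only [map_mul, map_inv, inl_aut]
    _ = inl (φ g.right x) := by rw [mul_inv_cancel_comm]

theorem injective_of_center_eq_bot [IsMulCommutative K] (hZ : center (H ⋊[φ] K) = ⊥) :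
    Function.Injective φ := by
  refine (injective_iff_map_eq_one φ).2 fun y hy => inr_injective (φ := φ) ?_
  rw [map_one, ← mem_bot, ← hZ, mem_center_iff]
  intro g
  ext
  · simp [hy]
  · exact mul_comm' _ _

theorem fixedPointFree_of_center_eq_bot [IsMulCommutative H] (hZ : center (H ⋊[φ] K) = ⊥)
    {b : K} (hb : zpowers b = ⊤) : FixedPointFree (φ b) := by
  intro x hx
  have hfix : ∀ y, φ y x = x := by
    have : ⊤ ≤ (MulAction.stabilizer (MulAut H) x).comap φ := hb ▸ zpowers_le.2 hx
    exact fun y => this (mem_top y)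
  refine inl_injective (φ := φ) ?_
  rw [map_one, ← mem_bot, ← hZ, mem_center_iff]
  intro g
  rw [← mul_inv_eq_iff_eq_mul, mul_inl_mul_inv, hfix]

open scoped IsMulCommutative in
theorem range_inl_eq_commutator [IsMulCommutative K] {b : K}
    (hb : Function.Surjective (commutatorMap (φ b))) :
    (inl : H →* H ⋊[φ] K).range = commutator (H ⋊[φ] K) := by
  refine le_antisymm ?_ ?_
  · rintro _ ⟨x, rfl⟩
    obtain ⟨g, rfl⟩ := hb x
    rw [inl_commutatorMap]
    exact commutator_mem_commutator (mem_top _) (mem_top _)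
  · rw [range_inl_eq_ker_rightHom]
    exact Abelianization.commutator_subset_ker _

theorem characteristic_range_inl [IsMulCommutative K] {b : K}
    (hb : Function.Surjective (commutatorMap (φ b))) :
    (inl : H →* H ⋊[φ] K).range.Characteristic :=
  range_inl_eq_commutator hb ▸ inferInstance

noncomputable def restrictLeft [(inl : H →* H ⋊[φ] K).range.Characteristic] :
    MulAut (H ⋊[φ] K) →* MulAut H :=
  (MulAut.congr (ofInjective inl_injective).symm).toMonoidHom.comp
    (MulAut.characteristic inl.range)

theorem inl_restrictLeft [(inl : H →* H ⋊[φ] K).range.Characteristic]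
    (σ : MulAut (H ⋊[φ] K)) (x : H) : inl (restrictLeft σ x) = σ (inl x) := by
  simp [restrictLeft, MulAut.congr, ofInjective_apply]

theorem hom_ext_of_zpowers_eq_top {M : Type*} [Group M] {f g : H ⋊[φ] K →* M}
    (hl : f.comp inl = g.comp inl) {b : K} (hb : zpowers b = ⊤) (hr : f (inr b) = g (inr b)) :
    f = g :=
  hom_ext hl <| eq_of_eqOn_dense (s := {b}) (by rw [← zpowers_eq_closure, hb]) <| by
    rintro _ rfl; exact hr

theorem right_apply_inr_of_forall_apply_inl [IsMulCommutative H] (hφ : Function.Injective φ)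
    {F : Type*} [FunLike F (H ⋊[φ] K) (H ⋊[φ] K)] [MonoidHomClass F (H ⋊[φ] K) (H ⋊[φ] K)]
    {β : F} (hβ : ∀ x, β (inl x) = inl x) (y : K) : (β (inr y)).right = y := by
  refine hφ (MulEquiv.ext fun x => inl_injective (φ := φ) ?_).symm
  calc inl (φ y x) = β (inr y * inl x * (inr y)⁻¹) := by rw [← map_inv, ← inl_aut, hβ]
    _ = inl (φ (β (inr y)).right x) := by rw [map_mul, map_mul, map_inv, hβ, mul_inl_mul_inv]

theorem exists_eq_conj_inl_of_forall_apply_inl [IsMulCommutative H] (hφ : Function.Injective φ)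
    {b : K} (hb : zpowers b = ⊤) (hsurj : Function.Surjective (commutatorMap (φ b)))
    (β : MulAut (H ⋊[φ] K)) (hβ : ∀ x, β (inl x) = inl x) :
    ∃ g, β = MulAut.conj (inl g) := by
  obtain ⟨g, hg⟩ := hsurj (β (inr b)).left
  refine ⟨g, MulEquiv.toMonoidHom_injective (hom_ext_of_zpowers_eq_top ?_ hb ?_)⟩
  · refine MonoidHom.ext fun x => ?_
    simp [hβ, mul_inl_mul_inv]
  · calc β (inr b) = inl (β (inr b)).left * inr b := by
          conv_lhs => rw [← inl_left_mul_inr_right (β (inr b))]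
          rw [right_apply_inr_of_forall_apply_inl hφ hβ b]
      _ = inl g * inr b * (inl g)⁻¹ := by
          rw [← hg, inl_commutatorMap, commutatorElement_def, inv_mul_cancel_right]

section Holomorph

variable [IsCyclic H] (φ)

def congrLeftHom : MulAut H →* MulAut (H ⋊[φ] K) where
  toFun α := congr α (MulEquiv.refl K) fun y => (IsCyclic.commute_mulAut α (φ y)).eq
  map_one' := rfl
  map_mul' _ _ := rfl

@[simp]
theorem congrLeftHom_inl (α : MulAut H) (x : H) : congrLeftHom φ α (inl x) = inl (α x) := rfl

def holomorphToMulAut : H ⋊[MonoidHom.id (MulAut H)] MulAut H →* MulAut (H ⋊[φ] K) :=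
  lift (MulAut.conj.comp inl) (congrLeftHom φ) fun α => by
    refine MonoidHom.ext fun x => MulEquiv.ext fun g => ?_
    simp [MulAut.conj_apply]

theorem holomorphToMulAut_apply (p : H ⋊[MonoidHom.id (MulAut H)] MulAut H) :
    holomorphToMulAut φ p = MulAut.conj (inl p.left) * congrLeftHom φ p.right := rfl

variable {φ}

theorem injective_holomorphToMulAut (hZ : center (H ⋊[φ] K) = ⊥) :
    Function.Injective (holomorphToMulAut φ) := by
  refine (injective_iff_map_eq_one _).2 fun p hp => ?_
  have hα : p.right = 1 := MulEquiv.ext fun x => inl_injective (φ := φ) <| by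
    simpa [holomorphToMulAut_apply, MulAut.conj_apply, mul_inl_mul_inv] using
      DFunLike.congr_fun hp (inl x)
  rw [holomorphToMulAut_apply, hα, map_one, mul_one] at hp
  have hcentral : inl p.left ∈ center (H ⋊[φ] K) := mem_center_iff.2 fun g =>
    (mul_inv_eq_iff_eq_mul.1 (DFunLike.congr_fun hp g)).symm
  rw [hZ, mem_bot, ← map_one inl] at hcentral
  exact SemidirectProduct.ext (inl_injective hcentral) hα

theorem surjective_holomorphToMulAut [IsMulCommutative K] [Finite H] (hφ : Function.Injective φ)
    {b : K} (hb : zpowers b = ⊤) (hfree : FixedPointFree (φ b)) :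
    Function.Surjective (holomorphToMulAut φ) := by
  intro σ
  have hsurj := hfree.commutatorMap_surjective
  have := characteristic_range_inl hsurj
  obtain ⟨g, hg⟩ := exists_eq_conj_inl_of_forall_apply_inl hφ hb hsurj
    (σ * (congrLeftHom φ (restrictLeft σ))⁻¹) fun x => by
      rw [MulAut.mul_apply, ← map_inv, congrLeftHom_inl, ← inl_restrictLeft,
        MulAut.apply_inv_self]
  refine ⟨⟨g, restrictLeft σ⟩, ?_⟩
  rw [holomorphToMulAut_apply, ← hg, inv_mul_cancel_right]

end Holomorph

end SemidirectProduct

theorem aut_of_centerless_semidirect_of_cyclics_general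
    {H K : Type} [Group H] [Group K] [Finite H]
    [IsCyclic H] [IsCyclic K] (φ : K →* MulAut H)
    (hZ : Subgroup.center (H ⋊[φ] K) = ⊥) :
    Nonempty (MulAut (H ⋊[φ] K) ≃* H ⋊[MonoidHom.id (MulAut H)] MulAut H) := by
  obtain ⟨b, hb⟩ := isCyclic_iff_exists_zpowers_eq_top.1 ‹IsCyclic K›
  exact ⟨(MulEquiv.ofBijective (holomorphToMulAut φ) ⟨injective_holomorphToMulAut hZ,
    surjective_holomorphToMulAut (injective_of_center_eq_bot hZ) hb
      (fixedPointFree_of_center_eq_bot hZ hb)⟩).symm⟩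

/-- Walls: if `G = C_n ⋊ C_k` has trivial center, then
`Aut(G) ≅ Hol(C_n) = C_n ⋊ Aut(C_n)`. -/
theorem aut_of_centerless_semidirect_of_cyclics
    {H K : Type} [Group H] [Group K] [Finite H] [Finite K]
    [IsCyclic H] [IsCyclic K] (φ : K →* MulAut H)
    (hZ : Subgroup.center (H ⋊[φ] K) = ⊥) :
    Nonempty (MulAut (H ⋊[φ] K) ≃* H ⋊[MonoidHom.id (MulAut H)] MulAut H) :=
  aut_of_centerless_semidirect_of_cyclics_general φ hZ
end

section
/- Let q > 3 be a prime and p a prime with q | p - 1. The number of isomorphism classes of groups of the form (C_p × C_p) ⋊ C_q where a generator of C_q acts as a diagonal non-scalar matrix diag(ζ, ζ^s) with ζ of order q, s ∉ {0, 1, -1} mod q, and determinant ζ^{1+s} ≠ 1, is (q - 3)/2. -/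
/-!
An isomorphism `G_s ≃* G_t` carries the normal subgroup `C_p × C_p` onto itself, since its order
is prime to `q`. There it is an injective `𝔽_p`-linear map intertwining `diag(ζ, ζ^s)` with the
action `diag(ζ^m, ζ^(t m))` of the image of the generator of `C_q`, so comparing eigenvalues gives
`{1, s} = {m, t m}`, i.e. `t = s` or `t = s⁻¹`. Conversely, swapping the two coordinates and
rescaling `C_q` by `s` is an isomorphism `G_s ≃* G_(s⁻¹)`. The classes are therefore the orbits of
the fixed-point-free involution `s ↦ s⁻¹` on the `q - 3` admissible values of `s`.
-/

open Multiplicative SemidirectProduct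

open Finset in
theorem Function.Involutive.two_mul_card_quot {α : Type*} [Finite α] {σ : α → α}
    (hσ : Function.Involutive σ) (hfree : ∀ a, σ a ≠ a) :
    2 * Nat.card (Quot fun a b : α => b = a ∨ b = σ a) = Nat.card α := by
  classical
  have := Fintype.ofFinite α
  let r : Setoid α :=
    { r := fun a b => b = a ∨ b = σ a
      iseqv :=
        { refl := fun _ => Or.inl rfl
          symm := by rintro a b (rfl | rfl) <;> simp [hσ _]
          trans := by rintro a b c (rfl | rfl) (rfl | rfl) <;> simp [hσ _] } }
  have hfiber (c : Quotient r) : #{b | Quotient.mk r b = c} = 2 := by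
    induction c using Quotient.ind with | _ a
    have : ({b | Quotient.mk r b = Quotient.mk r a} : Finset α) = {a, σ a} := by
      ext b
      simp only [mem_filter, mem_univ, true_and, Quotient.eq, mem_insert, mem_singleton]
      change a = b ∨ a = σ b ↔ _
      constructor
      · rintro (rfl | rfl) <;> simp [hσ _]
      · rintro (rfl | rfl) <;> simp [hσ _]
    rw [this, card_pair (hfree a).symm]
  change 2 * Nat.card (Quotient r) = _
  rw [Nat.card_eq_fintype_card, Nat.card_eq_fintype_card, ← card_univ (α := α),
    card_eq_sum_card_fiberwise (f := Quotient.mk r) (t := univ) (by simp),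
    sum_congr rfl fun c _ => hfiber c, sum_const, smul_eq_mul, card_univ, mul_comm]

open Finset in
theorem two_mul_card_quot_inv {F : Type*} [Field F] [Fintype F] (h : (-1 : F) ≠ 1) :
    2 * Nat.card (Quot fun s t : {s : F // s ≠ 0 ∧ s ≠ 1 ∧ s ≠ -1} => t.1 = s.1 ∨ t.1 = s.1⁻¹) =
      Fintype.card F - 3 := by
  classical
  let σ (s : {s : F // s ≠ 0 ∧ s ≠ 1 ∧ s ≠ -1}) : {s : F // s ≠ 0 ∧ s ≠ 1 ∧ s ≠ -1} :=
    ⟨s.1⁻¹, by simpa [inv_eq_iff_eq_inv] using s.2⟩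
  have hσ : Function.Involutive σ := fun s => Subtype.ext (inv_inv s.1)
  have hfree (s) : σ s ≠ s := fun hs => by
    have hs : s.1 * s.1 = 1 := by
      nth_rw 1 [← congrArg Subtype.val hs]
      exact inv_mul_cancel₀ s.2.1
    exact (mul_self_eq_one_iff.1 hs).elim s.2.2.1 s.2.2.2
  have hS : Fintype.card {s : F // s ≠ 0 ∧ s ≠ 1 ∧ s ≠ -1} = Fintype.card F - 3 := by
    have : ({s | s ≠ 0 ∧ s ≠ 1 ∧ s ≠ -1} : Finset F) = univ \ {0, 1, -1} := by ext; simp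
    rw [Fintype.card_subtype, this, card_sdiff_of_subset (subset_univ _), card_univ,
      card_insert_of_notMem (by simp), card_pair h.symm]
  rw [← hS, ← Nat.card_eq_fintype_card, ← hσ.two_mul_card_quot hfree]
  congr 1
  exact Nat.card_congr (Quot.congrRight fun s t => by simp [σ, Subtype.ext_iff])

theorem MonoidHom.apply_eq_one_of_coprime_card {G H : Type*} [Group G] [Group H] (f : G →* H)
    (h : (Nat.card G).Coprime (Nat.card H)) (g : G) : f g = 1 :=
  orderOf_eq_one_iff.1 <| Nat.eq_one_of_dvd_coprimes h
    ((orderOf_map_dvd f g).trans (orderOf_dvd_natCard g)) (orderOf_dvd_natCard (f g))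

namespace SemidirectProduct

variable {N G N' G' : Type*} [Group G] [Group G']

theorem mul_inl_mul_inv_s15 [CommGroup N] {φ : G →* MulAut N} (g : N ⋊[φ] G) (n : N) :
    g * inl n * g⁻¹ = inl (φ g.right n) := by
  ext
  · simp [mul_comm g.left]
  · simp

variable [Group N] {φ : G →* MulAut N}

def leftHom {M : Type*} [MulOneClass M] (f : M →* N ⋊[φ] G) (hf : ∀ m, (f m).right = 1) :
    M →* N where
  toFun m := (f m).left
  map_one' := by simp
  map_mul' a b := by simp [hf]

theorem inl_leftHom {M : Type*} [MulOneClass M] (f : M →* N ⋊[φ] G) (hf : ∀ m, (f m).right = 1)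
    (m : M) : inl (leftHom f hf m) = f m := by
  ext
  · rfl
  · simp [hf]

theorem right_apply_inl_eq_one [Group N'] {φ' : G' →* MulAut N'} (f : N ⋊[φ] G →* N' ⋊[φ'] G')
    (h : (Nat.card N).Coprime (Nat.card G')) (n : N) : (f (inl n)).right = 1 :=
  (rightHom.comp (f.comp inl)).apply_eq_one_of_coprime_card h n

theorem leftHom_aut [CommGroup N'] {φ' : G' →* MulAut N'} (f : N ⋊[φ] G →* N' ⋊[φ'] G')
    (hf : ∀ n, (f (inl n)).right = 1) (g : G) (n : N) :
    leftHom (f.comp inl) hf (φ g n) = φ' (f (inr g)).right (leftHom (f.comp inl) hf n) := by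
  apply inl_injective (φ := φ')
  rw [inl_leftHom, MonoidHom.comp_apply, inl_aut (φ := φ), map_mul, map_mul, map_inv, map_inv,
    ← MonoidHom.comp_apply f inl n, ← inl_leftHom (f.comp inl) hf n, mul_inl_mul_inv_s15]

theorem leftHom_injective [Group N'] {φ' : G' →* MulAut N'} {f : N ⋊[φ] G →* N' ⋊[φ'] G'}
    (hinj : Function.Injective f) (hf : ∀ n, (f (inl n)).right = 1) :
    Function.Injective (leftHom (f.comp inl) hf) := fun a b h =>
  inl_injective <| hinj <| by
    simpa only [inl_leftHom, MonoidHom.comp_apply] using congrArg (inl (φ := φ')) h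

end SemidirectProduct

theorem eq_or_eq_of_diag_eigenvector {F : Type*} [Field F] {α γ δ : F} {w : F × F} (hw : w ≠ 0)
    (h : (γ * w.1, δ * w.2) = α • w) : α = γ ∨ α = δ := by
  by_contra! hne
  simp only [Prod.ext_iff, Prod.smul_fst, Prod.smul_snd, smul_eq_mul] at h
  exact hw (Prod.ext ((mul_eq_mul_right_iff.1 h.1).resolve_left hne.1.symm)
    ((mul_eq_mul_right_iff.1 h.2).resolve_left hne.2.symm))

theorem eq_and_eq_or_eq_and_eq_of_map_diag {F : Type*} [Field F] {α β γ δ : F} (hαβ : α ≠ β)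
    (L : F × F →ₗ[F] F × F) (hL : Function.Injective L)
    (h : ∀ v : F × F, L (α * v.1, β * v.2) = (γ * (L v).1, δ * (L v).2)) :
    (γ = α ∧ δ = β) ∨ (γ = β ∧ δ = α) := by
  have hα : α = γ ∨ α = δ := eq_or_eq_of_diag_eigenvector (w := L (1, 0))
    ((map_ne_zero_iff L hL).2 (by simp)) (by rw [← h, ← map_smul]; simp)
  have hβ : β = γ ∨ β = δ := eq_or_eq_of_diag_eigenvector (w := L (0, 1))
    ((map_ne_zero_iff L hL).2 (by simp)) (by rw [← h, ← map_smul]; simp)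
  grind

theorem pow_zmod_val_injective {M : Type*} [Monoid M] {x : M} {n : ℕ} [NeZero n]
    (hx : orderOf x = n) : Function.Injective fun k : ZMod n => x ^ k.val := fun a b h =>
  ZMod.val_injective n <| pow_injOn_Iio_orderOf (by simp [hx, ZMod.val_lt])
    (by simp [hx, ZMod.val_lt]) h

theorem pow_zmod_val_mul {M : Type*} [Monoid M] {x : M} {n : ℕ} (hx : orderOf x = n)
    (a b : ZMod n) : x ^ (a * b).val = (x ^ a.val) ^ b.val := by
  subst hx
  rw [ZMod.val_mul, pow_mod_orderOf, pow_mul]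

def IsDiagonalAction {p q : ℕ} (ζ : (ZMod p)ˣ)
    (φ : ZMod q → (Multiplicative (ZMod q) →* MulAut (Multiplicative (ZMod p × ZMod p)))) : Prop :=
  ∀ (s : ZMod q) (v : ZMod p × ZMod p), φ s (ofAdd 1) (ofAdd v) =
    ofAdd ((ζ : ZMod p) * v.1, ((ζ ^ s.val : (ZMod p)ˣ) : ZMod p) * v.2)

namespace IsDiagonalAction

variable {p q : ℕ} {ζ : (ZMod p)ˣ}
  {φ : ZMod q → (Multiplicative (ZMod q) →* MulAut (Multiplicative (ZMod p × ZMod p)))}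

theorem pow_apply (hφ : IsDiagonalAction ζ φ) (s : ZMod q) (n : ℕ) (v : ZMod p × ZMod p) :
    (φ s (ofAdd 1) ^ n) (ofAdd v) =
      ofAdd (((ζ ^ n : (ZMod p)ˣ) : ZMod p) * v.1,
        (((ζ ^ s.val) ^ n : (ZMod p)ˣ) : ZMod p) * v.2) := by
  induction n generalizing v with
  | zero => simp
  | succ n ih =>
    rw [pow_succ, MulAut.mul_apply, hφ, ih]
    simp only [pow_succ, Units.val_mul]
    ring_nf

theorem apply [NeZero q] (hφ : IsDiagonalAction ζ φ) (hζ : orderOf ζ = q) (s k : ZMod q)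
    (v : ZMod p × ZMod p) :
    φ s (ofAdd k) (ofAdd v) =
      ofAdd (((ζ ^ k.val : (ZMod p)ˣ) : ZMod p) * v.1,
        ((ζ ^ (s * k).val : (ZMod p)ˣ) : ZMod p) * v.2) := by
  have hk : ofAdd k = ofAdd (1 : ZMod q) ^ k.val := by
    rw [← ofAdd_nsmul, nsmul_one, ZMod.natCast_zmod_val]
  rw [hk, map_pow, hφ.pow_apply, pow_zmod_val_mul hζ]

theorem nonempty_mulEquiv_inv [Fact q.Prime] (hφ : IsDiagonalAction ζ φ) (hζ : orderOf ζ = q)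
    {s : ZMod q} (hs : s ≠ 0) :
    Nonempty ((Multiplicative (ZMod p × ZMod p) ⋊[φ s] Multiplicative (ZMod q)) ≃*
      (Multiplicative (ZMod p × ZMod p) ⋊[φ s⁻¹] Multiplicative (ZMod q))) := by
  refine ⟨congr AddEquiv.prodComm.toMultiplicative
    (LinearEquiv.smulOfNeZero (ZMod q) (ZMod q) s hs).toAddEquiv.toMultiplicative fun k => ?_⟩
  refine MulEquiv.ext fun v => ?_
  induction k using Multiplicative.rec with | _ k
  induction v using Multiplicative.rec with | _ v
  simp [hφ.apply hζ, inv_mul_cancel_left₀ hs]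

theorem eq_or_eq_inv_of_mulEquiv [Fact p.Prime] [Fact q.Prime] (hpq : p ≠ q)
    (hφ : IsDiagonalAction ζ φ) (hζ : orderOf ζ = q) {s t : ZMod q} (hs : s ≠ 1)
    (e : (Multiplicative (ZMod p × ZMod p) ⋊[φ s] Multiplicative (ZMod q)) ≃*
      (Multiplicative (ZMod p × ZMod p) ⋊[φ t] Multiplicative (ZMod q))) :
    t = s ∨ t = s⁻¹ := by
  have hcop : p.Coprime q := (Nat.coprime_primes Fact.out Fact.out).2 hpq
  have hright : ∀ v, (e (inl v)).right = 1 :=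
    right_apply_inl_eq_one e.toMonoidHom (by simpa using hcop.mul_left hcop)
  let L : ZMod p × ZMod p →ₗ[ZMod p] ZMod p × ZMod p :=
    (AddMonoidHom.toMultiplicative.symm (leftHom (e.toMonoidHom.comp inl) hright)).toZModLinearMap
      p
  have hL : Function.Injective L :=
    toAdd.injective.comp <| (leftHom_injective e.injective hright).comp ofAdd.injective
  set m := toAdd (e (inr (ofAdd 1))).right
  have hLφ (v : ZMod p × ZMod p) :
      L ((ζ : ZMod p) * v.1, ((ζ ^ s.val : (ZMod p)ˣ) : ZMod p) * v.2) =
        (((ζ ^ m.val : (ZMod p)ˣ) : ZMod p) * (L v).1,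
          ((ζ ^ (t * m).val : (ZMod p)ˣ) : ZMod p) * (L v).2) := by
    have h := congrArg toAdd (leftHom_aut e.toMonoidHom hright (ofAdd 1) (ofAdd v))
    rw [hφ] at h
    exact h.trans (congrArg toAdd (hφ.apply hζ t m (L v)))
  have hχ : Function.Injective fun k : ZMod q => ((ζ ^ k.val : (ZMod p)ˣ) : ZMod p) :=
    Units.val_injective.comp (pow_zmod_val_injective hζ)
  have hζ1 : (ζ : ZMod p) = ((ζ ^ (1 : ZMod q).val : (ZMod p)ˣ) : ZMod p) := by
    rw [ZMod.val_one, pow_one]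
  rw [hζ1] at hLφ
  rcases eq_and_eq_or_eq_and_eq_of_map_diag (hχ.ne hs.symm) L hL hLφ with ⟨hm, htm⟩ | ⟨hm, htm⟩
  · left
    simpa [hχ hm] using hχ htm
  · right
    rw [hχ hm] at htm
    exact eq_inv_of_mul_eq_one_left (hχ htm)

end IsDiagonalAction

/-- Type 8 isomorphism count: for primes `q > 3` and `p` with `q | p - 1`, and a
fixed `ζ ∈ F_p*` of order `q`, the groups `G_s = (C_p × C_p) ⋊ C_q`, where a
generator of `C_q` acts as `diag(ζ, ζ^s)` with `s ∉ {0, 1, -1}` (so the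
determinant `ζ^{1+s} ≠ 1`), fall into exactly `(q - 3)/2` isomorphism
classes. -/
theorem count_type8_iso_classes
    {p q : ℕ} (hp : p.Prime) (hq : q.Prime) (hq3 : 3 < q) (hdvd : q ∣ p - 1)
    (ζ : (ZMod p)ˣ) (hζ : orderOf ζ = q)
    (φ : ZMod q → (Multiplicative (ZMod q) →* MulAut (Multiplicative (ZMod p × ZMod p))))
    (hact : ∀ (s : ZMod q) (v : ZMod p × ZMod p),
      φ s (Multiplicative.ofAdd (1 : ZMod q)) (Multiplicative.ofAdd v) =
        Multiplicative.ofAdd ((ζ : ZMod p) * v.1, ((ζ ^ s.val : (ZMod p)ˣ) : ZMod p) * v.2)) :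
    Nat.card (Quot (fun s t : {s : ZMod q // s ≠ 0 ∧ s ≠ 1 ∧ s ≠ -1} =>
      Nonempty ((Multiplicative (ZMod p × ZMod p) ⋊[φ s.1] Multiplicative (ZMod q)) ≃*
        (Multiplicative (ZMod p × ZMod p) ⋊[φ t.1] Multiplicative (ZMod q))))) =
      (q - 3) / 2 := by
  have : Fact p.Prime := ⟨hp⟩
  have : Fact q.Prime := ⟨hq⟩
  have hpq : p ≠ q := by
    have := Nat.le_of_dvd (Nat.sub_pos_of_lt hp.one_lt) hdvd
    omega
  have hiso (s t : {s : ZMod q // s ≠ 0 ∧ s ≠ 1 ∧ s ≠ -1}) :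
      Nonempty ((Multiplicative (ZMod p × ZMod p) ⋊[φ s.1] Multiplicative (ZMod q)) ≃*
        (Multiplicative (ZMod p × ZMod p) ⋊[φ t.1] Multiplicative (ZMod q))) ↔
      t.1 = s.1 ∨ t.1 = s.1⁻¹ := by
    refine ⟨fun ⟨e⟩ => IsDiagonalAction.eq_or_eq_inv_of_mulEquiv hpq hact hζ s.2.2.1 e, ?_⟩
    rintro (h | h) <;> rw [h]
    · exact ⟨MulEquiv.refl _⟩
    · exact IsDiagonalAction.nonempty_mulEquiv_inv hact hζ s.2.1
  have : Fact (2 < q) := ⟨by omega⟩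
  have hcount := two_mul_card_quot_inv (ZMod.neg_one_ne_one (n := q))
  rw [ZMod.card] at hcount
  rw [Nat.card_congr (Quot.congrRight hiso)]
  omega
end

section
/- Let q > 2 be a prime, p a prime with q | p - 1, and G = (C_p × C_p) ⋊_S C_q where a generator of C_q acts on C_p × C_p as a non-identity scalar matrix of order q. Then Aut(G) is isomorphic to Hol(C_p × C_p) = (C_p × C_p) ⋊ GL(2, p), the affine group in dimension 2 over F_p. -/
set_option linter.unusedSectionVars false

namespace AutType7

open SemidirectProduct Multiplicative Finset

abbrev Vt (p : ℕ) : Type := Multiplicative (ZMod p × ZMod p)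
abbrev Qt (q : ℕ) : Type := Multiplicative (ZMod q)

variable {p q : ℕ}

lemma hom_smul [NeZero p] {F : Type*} [FunLike F (Vt p) (Vt p)]
    [MonoidHomClass F (Vt p) (Vt p)] (B : F) (a : ZMod p) (w : ZMod p × ZMod p) :
    (B (ofAdd (a • w))).toAdd = a • (B (ofAdd w)).toAdd := by
  have h1 : a • w = a.val • w := by
    rw [← Nat.cast_smul_eq_nsmul (ZMod p), ZMod.natCast_val, ZMod.cast_id]
  have h2 : a • (B (ofAdd w)).toAdd = a.val • (B (ofAdd w)).toAdd := by
    rw [← Nat.cast_smul_eq_nsmul (ZMod p), ZMod.natCast_val, ZMod.cast_id]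
  rw [h1, h2, ofAdd_nsmul, map_pow, toAdd_pow]

lemma ofAdd_one_pow [NeZero q] (s : ZMod q) :
    (ofAdd (1 : ZMod q)) ^ s.val = ofAdd s := by
  rw [← ofAdd_nsmul]
  congr 1
  rw [nsmul_eq_mul, mul_one, ZMod.natCast_val, ZMod.cast_id]

variable (φ : Qt q →* MulAut (Vt p)) (l : (ZMod p)ˣ)

lemma phi_apply [NeZero q]
    (hact : ∀ v : ZMod p × ZMod p,
      φ (ofAdd (1 : ZMod q)) (ofAdd v) = ofAdd ((l : ZMod p) • v))
    (s : ZMod q) (v : ZMod p × ZMod p) :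
    φ (ofAdd s) (ofAdd v) = ofAdd (((l : ZMod p) ^ s.val) • v) := by
  have key : ∀ (n : ℕ) (w : ZMod p × ZMod p),
      ((φ (ofAdd (1 : ZMod q))) ^ n) (ofAdd w) = ofAdd (((l : ZMod p) ^ n) • w) := by
    intro n
    induction n with
    | zero => intro w; simp
    | succ n ih =>
      intro w
      rw [pow_succ', MulAut.mul_apply, ih w, hact, smul_smul, ← pow_succ']
  rw [← ofAdd_one_pow s, map_pow, key]

section Main

variable [Fact p.Prime] [Fact q.Prime]

lemma lam_pow_q (hlo : orderOf l = q) : ((l : ZMod p)) ^ q = 1 := by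
  have h : l ^ q = 1 := by rw [← hlo]; exact pow_orderOf_eq_one l
  have := congrArg (Units.val) h
  simpa using this

lemma lam_sub_one (hlo : orderOf l = q) (hq1 : 1 < q) : ((l : ZMod p)) - 1 ≠ 0 := by
  intro h
  have h1 : (l : ZMod p) = 1 := by linear_combination h
  have h2 : l = 1 := Units.ext (by simpa using h1)
  rw [h2, orderOf_one] at hlo
  omega

lemma geom_add (hq : q.Prime) (hlo : orderOf l = q) (s t : ZMod q) :
    (∑ i ∈ range (s + t).val, ((l : ZMod p)) ^ i) =
      (∑ i ∈ range s.val, ((l : ZMod p)) ^ i) +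
        (l : ZMod p) ^ s.val * ∑ i ∈ range t.val, ((l : ZMod p)) ^ i := by
  haveI : NeZero q := ⟨Nat.Prime.pos hq |>.ne'⟩
  have hmod : ∀ n : ℕ, ((l : ZMod p)) ^ (n % q) = ((l : ZMod p)) ^ n := by
    intro n
    conv_rhs => rw [← Nat.div_add_mod n q]
    rw [pow_add, pow_mul, lam_pow_q l hlo, one_pow, one_mul]
  apply mul_right_cancel₀ (lam_sub_one l hlo hq.one_lt)
  rw [add_mul, mul_assoc, geom_sum_mul, geom_sum_mul, geom_sum_mul, ZMod.val_add, hmod, pow_add]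
  ring

lemma V_pow_p (x : Vt p) : x ^ p = 1 := by
  have hz : p • x.toAdd = (0 : ZMod p × ZMod p) := by
    rw [← Nat.cast_smul_eq_nsmul (ZMod p), ZMod.natCast_self, zero_smul]
  rw [← ofAdd_toAdd x, ← ofAdd_nsmul, hz, ofAdd_zero]

lemma Q_pow_p (hp : p.Prime) (hq : q.Prime) (hdvd : q ∣ p - 1)
    (y : Qt q) (hy : y ^ p = 1) : y = 1 := by
  have h1 : p • y.toAdd = (0 : ZMod q) := by
    have := congrArg Multiplicative.toAdd hy
    rwa [toAdd_pow, toAdd_one] at this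
  have h2 : (p : ZMod q) * y.toAdd = 0 := by
    rwa [← Nat.cast_smul_eq_nsmul (ZMod q), smul_eq_mul] at h1
  have hqp : q < p := by
    have h1 : q ≤ p - 1 := Nat.le_of_dvd (by have := hp.two_le; omega) hdvd
    have := hp.two_le
    omega
  have hpu : (p : ZMod q) ≠ 0 := by
    rw [Ne, ZMod.natCast_eq_zero_iff]
    intro hqd
    have := (Nat.prime_dvd_prime_iff_eq hq hp).mp hqd
    omega
  have h3 : y.toAdd = 0 := by
    rcases mul_eq_zero.mp h2 with h | h
    · exact absurd h hpu
    · exact h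
  rw [← ofAdd_toAdd y, h3, ofAdd_zero]

lemma right_apply_inl (hp : p.Prime) (hq : q.Prime) (hdvd : q ∣ p - 1)
    (α : MulAut (Vt p ⋊[φ] Qt q)) (v : Vt p) : (α (inl v)).right = 1 := by
  have h1 : (inl v : Vt p ⋊[φ] Qt q) ^ p = 1 := by
    rw [← map_pow, V_pow_p, map_one]
  have h2 : (α (inl v)) ^ p = 1 := by rw [← map_pow, h1, map_one]
  have h3 := congrArg rightHom h2
  rw [map_pow, map_one] at h3
  exact Q_pow_p hp hq hdvd _ h3

/-- restriction of an automorphism of `G` to the subgroup `V`. -/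
def Ahom (α : MulAut (Vt p ⋊[φ] Qt q))
    (hr : ∀ v : Vt p, (α (inl v)).right = 1) : Vt p →* Vt p where
  toFun v := (α (inl v)).left
  map_one' := by simp
  map_mul' v v' := by
    have h : (inl (v * v') : Vt p ⋊[φ] Qt q) = inl v * inl v' := map_mul _ _ _
    simp only [h, map_mul, mul_left, hr, map_one, MulAut.one_apply]

@[simp] lemma Ahom_apply (α : MulAut (Vt p ⋊[φ] Qt q))
    (hr : ∀ v : Vt p, (α (inl v)).right = 1) (v : Vt p) :
    Ahom φ α hr v = (α (inl v)).left := rfl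

lemma apply_inl (α : MulAut (Vt p ⋊[φ] Qt q))
    (hr : ∀ v : Vt p, (α (inl v)).right = 1) (v : Vt p) :
    α (inl v) = inl (Ahom φ α hr v) := by
  ext : 1
  · rfl
  · rw [right_inl]; exact hr v

/-- restriction of an automorphism of `G` to `V`, as an automorphism of `V`. -/
def Aeq (α : MulAut (Vt p ⋊[φ] Qt q))
    (hr : ∀ v : Vt p, (α (inl v)).right = 1)
    (hr' : ∀ v : Vt p, (α⁻¹ (inl v)).right = 1) : Vt p ≃* Vt p where
  toFun := Ahom φ α hr
  invFun := Ahom φ α⁻¹ hr'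
  left_inv v := by
    show (α⁻¹ (inl (Ahom φ α hr v))).left = v
    rw [← apply_inl φ α hr v, ← MulAut.mul_apply, inv_mul_cancel, MulAut.one_apply, left_inl]
  right_inv v := by
    show (α (inl (Ahom φ α⁻¹ hr' v))).left = v
    rw [← apply_inl φ α⁻¹ hr' v, ← MulAut.mul_apply, mul_inv_cancel, MulAut.one_apply, left_inl]
  map_mul' a b := map_mul (Ahom φ α hr) a b

lemma conj_inl (a : Vt p ⋊[φ] Qt q) (u : Vt p) :
    a * inl u * a⁻¹ = inl (φ a.right u) := by
  ext : 1
  · simp only [mul_left, mul_right, inv_left, inv_right, left_inl, right_inl, mul_one]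
    rw [map_inv φ, ← MulAut.mul_apply, mul_inv_cancel, MulAut.one_apply]
    rw [mul_comm a.left, mul_assoc, mul_inv_cancel, mul_one]
  · simp

lemma right_apply_inr (hp : p.Prime) (hq : q.Prime) (hdvd : q ∣ p - 1)
    (hlo : orderOf l = q)
    (hact : ∀ v : ZMod p × ZMod p,
      φ (ofAdd (1 : ZMod q)) (ofAdd v) = ofAdd ((l : ZMod p) • v))
    (α : MulAut (Vt p ⋊[φ] Qt q)) :
    (α (inr (ofAdd (1 : ZMod q)))).right = ofAdd (1 : ZMod q) := by
  haveI : NeZero q := ⟨hq.pos.ne'⟩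
  set hr := right_apply_inl φ hp hq hdvd α with hrdef
  set hr' := right_apply_inl φ hp hq hdvd α⁻¹ with hrdef'
  -- key conjugation identity
  have key : ∀ y : Vt p,
      φ (α (inr (ofAdd (1 : ZMod q)))).right (Ahom φ α hr y)
        = Ahom φ α hr (φ (ofAdd (1 : ZMod q)) y) := by
    intro y
    have h2 : inl (Ahom φ α hr (φ (ofAdd (1 : ZMod q)) y))
        = α (inr (ofAdd (1 : ZMod q))) * inl (Ahom φ α hr y)
          * (α (inr (ofAdd (1 : ZMod q))))⁻¹ := by
      rw [← apply_inl φ α hr (φ (ofAdd (1 : ZMod q)) y), ← apply_inl φ α hr y,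
        ← map_inv α, ← map_inv inr, ← map_mul α, ← map_mul α, ← inl_aut]
    rw [conj_inl] at h2
    exact (inl_injective h2).symm
  -- turn it into a scalar identity
  set k : ZMod q := (α (inr (ofAdd (1 : ZMod q)))).right.toAdd with hk
  have hsc : ∀ v : ZMod p × ZMod p,
      ((l : ZMod p) ^ k.val) • v = (l : ZMod p) • v := by
    intro v
    have hy := key ((Aeq φ α hr hr').symm (ofAdd v))
    have hAy : Ahom φ α hr ((Aeq φ α hr hr').symm (ofAdd v)) = ofAdd v :=
      (Aeq φ α hr hr').apply_symm_apply (ofAdd v)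
    rw [hAy] at hy
    have hL : φ (α (inr (ofAdd (1 : ZMod q)))).right (ofAdd v)
        = ofAdd (((l : ZMod p) ^ k.val) • v) := by
      conv_lhs => rw [← ofAdd_toAdd (α (inr (ofAdd (1 : ZMod q)))).right]
      rw [phi_apply φ l hact]
    set y := (Aeq φ α hr hr').symm (ofAdd v) with hydef
    have hR : Ahom φ α hr (φ (ofAdd (1 : ZMod q)) y) = ofAdd ((l : ZMod p) • v) := by
      have h1 : φ (ofAdd (1 : ZMod q)) y = ofAdd ((l : ZMod p) • y.toAdd) := by
        conv_lhs => rw [← ofAdd_toAdd y]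
        rw [hact]
      rw [h1]
      have h2 := hom_smul (Ahom φ α hr) (l : ZMod p) y.toAdd
      have h3 : ofAdd ((Ahom φ α hr (ofAdd ((l : ZMod p) • y.toAdd))).toAdd)
          = ofAdd ((l : ZMod p) • (Ahom φ α hr (ofAdd y.toAdd)).toAdd) := by rw [h2]
      rw [ofAdd_toAdd] at h3
      rw [h3, ofAdd_toAdd, hAy]
      rfl
    rw [hL, hR] at hy
    have := congrArg Multiplicative.toAdd hy
    simpa using this
  -- extract the scalar equality
  have hsc1 : (l : ZMod p) ^ k.val = (l : ZMod p) := by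
    have := congrArg Prod.fst (hsc ((1 : ZMod p), (0 : ZMod p)))
    simpa using this
  have hu : l ^ k.val = l ^ 1 := by
    apply Units.ext
    rw [Units.val_pow_eq_pow_val, pow_one]
    exact hsc1
  have hmod : k.val ≡ 1 [MOD q] := by
    have := (pow_eq_pow_iff_modEq).mp hu
    rwa [hlo] at this
  have hkval : k.val = 1 := by
    have h1 : k.val < q := ZMod.val_lt k
    have h2 : k.val % q = 1 % q := hmod
    rw [Nat.mod_eq_of_lt h1, Nat.mod_eq_of_lt hq.one_lt] at h2
    exact h2
  have : k = (1 : ZMod q) := by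
    have := congrArg (fun n : ℕ => (n : ZMod q)) hkval
    simpa [ZMod.natCast_val, ZMod.cast_id] using this
  rw [← ofAdd_toAdd (α (inr (ofAdd (1 : ZMod q)))).right, ← hk, this]

lemma apply_inr (hp : p.Prime) (hq : q.Prime) (hdvd : q ∣ p - 1)
    (hlo : orderOf l = q)
    (hact : ∀ v : ZMod p × ZMod p,
      φ (ofAdd (1 : ZMod q)) (ofAdd v) = ofAdd ((l : ZMod p) • v))
    (α : MulAut (Vt p ⋊[φ] Qt q)) :
    α (inr (ofAdd (1 : ZMod q)))
      = inl ((α (inr (ofAdd (1 : ZMod q)))).left) * inr (ofAdd (1 : ZMod q)) := by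
  conv_lhs => rw [← inl_left_mul_inr_right (α (inr (ofAdd (1 : ZMod q))))]
  rw [right_apply_inr φ l hp hq hdvd hlo hact α]

variable (hp : p.Prime) (hq : q.Prime) (hdvd : q ∣ p - 1)
  (hlo : orderOf l = q)
  (hact : ∀ v : ZMod p × ZMod p,
      φ (ofAdd (1 : ZMod q)) (ofAdd v) = ofAdd ((l : ZMod p) • v))

/-- the map `Aut(G) → Hol(V)`. -/
def Fhom : MulAut (Vt p ⋊[φ] Qt q) →*
      Vt p ⋊[MonoidHom.id (MulAut (Vt p))] MulAut (Vt p) where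
  toFun α := ⟨(α (inr (ofAdd (1 : ZMod q)))).left,
    Aeq φ α (right_apply_inl φ hp hq hdvd α) (right_apply_inl φ hp hq hdvd α⁻¹)⟩
  map_one' := by
    refine SemidirectProduct.ext ?_ ?_
    · show ((1 : MulAut (Vt p ⋊[φ] Qt q)) (inr (ofAdd (1 : ZMod q)))).left = 1
      rw [MulAut.one_apply, left_inr]
    · show (Aeq φ 1 _ _ : Vt p ≃* Vt p) = 1
      ext v : 1
      rfl
  map_mul' α β := by
    refine SemidirectProduct.ext ?_ ?_
    · show ((α * β) (inr (ofAdd (1 : ZMod q)))).left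
        = (α (inr (ofAdd (1 : ZMod q)))).left *
          (Aeq φ α (right_apply_inl φ hp hq hdvd α) (right_apply_inl φ hp hq hdvd α⁻¹))
            ((β (inr (ofAdd (1 : ZMod q)))).left)
      conv_lhs => rw [MulAut.mul_apply, apply_inr φ l hp hq hdvd hlo hact β, map_mul,
        apply_inl φ α (right_apply_inl φ hp hq hdvd α), mul_left, left_inl, right_inl,
        map_one φ, MulAut.one_apply]
      rw [mul_comm]
      rfl
    · show (Aeq φ (α * β) _ _ : Vt p ≃* Vt p)
        = Aeq φ α (right_apply_inl φ hp hq hdvd α) (right_apply_inl φ hp hq hdvd α⁻¹) *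
          Aeq φ β (right_apply_inl φ hp hq hdvd β) (right_apply_inl φ hp hq hdvd β⁻¹)
      ext v : 1
      show ((α * β) (inl v)).left = _
      rw [MulAut.mul_apply, apply_inl φ β (right_apply_inl φ hp hq hdvd β) v]
      rfl

lemma Fhom_inj : Function.Injective (Fhom φ l hp hq hdvd hlo hact) := by
  rw [injective_iff_map_eq_one]
  intro α hα
  have hw : (α (inr (ofAdd (1 : ZMod q)))).left = 1 := congrArg SemidirectProduct.left hα
  have hA : ∀ v : Vt p, (α (inl v)).left = v := by
    intro v
    have h1 : (Aeq φ α (right_apply_inl φ hp hq hdvd α) (right_apply_inl φ hp hq hdvd α⁻¹)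
        : Vt p ≃* Vt p) = 1 := congrArg SemidirectProduct.right hα
    exact congrArg (fun e : Vt p ≃* Vt p => e v) h1
  have hinl : ∀ v : Vt p, α (inl v) = inl v := by
    intro v
    rw [apply_inl φ α (right_apply_inl φ hp hq hdvd α) v]
    exact congrArg inl (hA v)
  have hinr1 : α (inr (ofAdd (1 : ZMod q))) = inr (ofAdd (1 : ZMod q)) := by
    rw [apply_inr φ l hp hq hdvd hlo hact α, hw, map_one, one_mul]
  have hinr : ∀ s : Qt q, α (inr s) = inr s := by
    haveI : NeZero q := ⟨hq.pos.ne'⟩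
    intro s
    rw [← ofAdd_toAdd s, ← ofAdd_one_pow s.toAdd, map_pow, map_pow, hinr1]
  refine DFunLike.ext _ _ fun x => ?_
  show α x = x
  conv_lhs => rw [← inl_left_mul_inr_right x, map_mul, hinl, hinr]
  rw [inl_left_mul_inr_right]

lemma equiv_smul (B : Vt p ≃* Vt p) (a : ZMod p) (z : Vt p) :
    B (ofAdd (a • z.toAdd)) = ofAdd (a • (B z).toAdd) := by
  have h := hom_smul B a z.toAdd
  rw [ofAdd_toAdd] at h
  rw [← ofAdd_toAdd (B (ofAdd (a • z.toAdd))), h]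

include hact in
lemma phi_apply' [NeZero q] (s : Qt q) (z : Vt p) :
    φ s z = ofAdd (((l : ZMod p) ^ s.toAdd.val) • z.toAdd) := by
  conv_lhs => rw [← ofAdd_toAdd s, ← ofAdd_toAdd z]
  rw [phi_apply φ l hact]

/-- the cocycle. -/
def cmap (u : Vt p) (s : Qt q) : Vt p :=
  ofAdd ((∑ i ∈ range s.toAdd.val, ((l : ZMod p)) ^ i) • u.toAdd)

/-- the underlying map of the automorphism of `G` attached to `(B, u)`. -/
def Fmap (B : Vt p ≃* Vt p) (u : Vt p) (x : Vt p ⋊[φ] Qt q) : Vt p ⋊[φ] Qt q :=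
  ⟨B x.left * cmap l u x.right, x.right⟩

include hq hlo hact in
lemma Fmap_mul [NeZero q] (B : Vt p ≃* Vt p) (u : Vt p) (x y : Vt p ⋊[φ] Qt q) :
    Fmap φ l B u (x * y) = Fmap φ l B u x * Fmap φ l B u y := by
  refine SemidirectProduct.ext ?_ ?_
  · show B ((x * y).left) * cmap l u ((x * y).right)
      = B x.left * cmap l u x.right * φ x.right (B y.left * cmap l u y.right)
    apply Multiplicative.toAdd.injective
    simp only [mul_left, mul_right, map_mul, toAdd_mul, cmap, toAdd_ofAdd,
      phi_apply' φ l hact, equiv_smul, smul_add, smul_smul]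
    rw [geom_add l hq hlo, add_smul]
    abel
  · rfl

lemma Fmap_comp [NeZero q] (B B' : Vt p ≃* Vt p) (u u' : Vt p) (x : Vt p ⋊[φ] Qt q) :
    Fmap φ l B u (Fmap φ l B' u' x) = Fmap φ l (B'.trans B) (B u' * u) x := by
  refine SemidirectProduct.ext ?_ ?_
  · show B (B' x.left * cmap l u' x.right) * cmap l u x.right
      = (B'.trans B) x.left * cmap l (B u' * u) x.right
    apply Multiplicative.toAdd.injective
    simp only [map_mul, toAdd_mul, cmap, toAdd_ofAdd, equiv_smul, MulEquiv.trans_apply,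
      smul_add]
    abel
  · rfl

lemma Fmap_id (x : Vt p ⋊[φ] Qt q) : Fmap φ l (MulEquiv.refl (Vt p)) 1 x = x := by
  refine SemidirectProduct.ext ?_ ?_
  · show (MulEquiv.refl (Vt p)) x.left * cmap l 1 x.right = x.left
    have h : cmap l (1 : Vt p) x.right = 1 := by
      show ofAdd _ = 1
      rw [toAdd_one, smul_zero, ofAdd_zero]
    rw [h, mul_one, MulEquiv.refl_apply]
  · rfl

/-- the automorphism of `G` attached to `(B, u)`. -/
def FmapEquiv [NeZero q] (B : Vt p ≃* Vt p) (u : Vt p) : MulAut (Vt p ⋊[φ] Qt q) where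
  toFun := Fmap φ l B u
  invFun := Fmap φ l B.symm ((B.symm u)⁻¹)
  left_inv x := by
    rw [Fmap_comp φ l, mul_inv_cancel, MulEquiv.self_trans_symm,
      Fmap_id]
  right_inv x := by
    rw [Fmap_comp φ l, map_inv, MulEquiv.apply_symm_apply, inv_mul_cancel,
      MulEquiv.symm_trans_self, Fmap_id]
  map_mul' := Fmap_mul φ l hq hlo hact B u

lemma Fhom_surj : Function.Surjective (Fhom φ l hp hq hdvd hlo hact) := by
  haveI : NeZero q := ⟨hq.pos.ne'⟩
  haveI : Fact (1 < q) := ⟨hq.one_lt⟩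
  rintro ⟨u, B⟩
  refine ⟨FmapEquiv φ l hq hlo hact B u, ?_⟩
  refine SemidirectProduct.ext ?_ ?_
  · show ((FmapEquiv φ l hq hlo hact B u) (inr (ofAdd (1 : ZMod q)))).left = u
    show B ((inr (ofAdd (1 : ZMod q)) : Vt p ⋊[φ] Qt q).left)
      * cmap l u ((inr (ofAdd (1 : ZMod q)) : Vt p ⋊[φ] Qt q).right) = u
    rw [left_inr, map_one, one_mul]
    show ofAdd ((∑ i ∈ range (ofAdd (1 : ZMod q)).toAdd.val, ((l : ZMod p)) ^ i) • u.toAdd) = u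
    rw [toAdd_ofAdd, ZMod.val_one, range_one, sum_singleton, pow_zero, one_smul, ofAdd_toAdd]
  · show (Aeq φ (FmapEquiv φ l hq hlo hact B u)
      (right_apply_inl φ hp hq hdvd (FmapEquiv φ l hq hlo hact B u))
      (right_apply_inl φ hp hq hdvd (FmapEquiv φ l hq hlo hact B u)⁻¹) : Vt p ≃* Vt p) = B
    refine MulEquiv.ext fun v => ?_
    show ((FmapEquiv φ l hq hlo hact B u) (inl v)).left = B v
    show B ((inl v : Vt p ⋊[φ] Qt q).left) * cmap l u ((inl v : Vt p ⋊[φ] Qt q).right) = B v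
    have h : cmap l u ((inl v : Vt p ⋊[φ] Qt q).right) = 1 := by
      show ofAdd _ = 1
      rw [right_inl, toAdd_one, ZMod.val_zero, range_zero, sum_empty, zero_smul, ofAdd_zero]
    rw [h, mul_one, left_inl]

end Main

end AutType7

/-- Type 7: if `q > 2`, `q | p - 1`, and `G = (C_p × C_p) ⋊_S C_q` where a
generator of `C_q` acts on `C_p × C_p` as a nontrivial scalar matrix of
order `q`, then `Aut(G) ≅ Hol(C_p × C_p)`. -/
theorem aut_type7
    {p q : ℕ} (hp : p.Prime) (hq : q.Prime) (hq2 : 2 < q) (hdvd : q ∣ p - 1)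
    (φ : Multiplicative (ZMod q) →* MulAut (Multiplicative (ZMod p × ZMod p)))
    (l : (ZMod p)ˣ) (hlo : orderOf l = q)
    (hact : ∀ v : ZMod p × ZMod p,
      φ (Multiplicative.ofAdd (1 : ZMod q)) (Multiplicative.ofAdd v) =
        Multiplicative.ofAdd ((l : ZMod p) • v)) :
    Nonempty (MulAut (Multiplicative (ZMod p × ZMod p) ⋊[φ] Multiplicative (ZMod q)) ≃*
      Multiplicative (ZMod p × ZMod p)
        ⋊[MonoidHom.id (MulAut (Multiplicative (ZMod p × ZMod p)))]
        MulAut (Multiplicative (ZMod p × ZMod p))) := by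
  haveI : Fact p.Prime := ⟨hp⟩
  haveI : Fact q.Prime := ⟨hq⟩
  exact ⟨MulEquiv.ofBijective (AutType7.Fhom φ l hp hq hdvd hlo hact)
    ⟨AutType7.Fhom_inj φ l hp hq hdvd hlo hact,
     AutType7.Fhom_surj φ l hp hq hdvd hlo hact⟩⟩
end
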